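/- The A-linear map φ : A^(ℕ) → A defined by φ(a₁, a₂, a₃, …) = y·a₁ satisfies φ∘∂ = x·φ, i.e., φ is a morphism of differential A-modules from (A^(ℕ), ∂) to (A, x·); moreover the induced map on homology, H(φ) : ker ∂ / im ∂ → ker(x·) / im(x·), is an isomorphism. In particular, ker ∂ / im ∂ ≅ (x,y)/(x) ≅ A/(x). -/

import Mathlib

set_option synthInstance.maxHeartbeats 400000
set_option maxHeartbeats 1000000

open scoped DualNumber

universe u

namespace QShapedExample

variable (k : Type u) [CommRing k]

/-- `k` is a hereditary ring: every ideal is projective. -/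
def IsHereditary : Prop := ∀ I : Ideal k, Module.Projective k I

/-- The ring `A = k[X,Y]/(X², XY)`. -/
abbrev Adef : Type u :=
  MvPolynomial (Fin 2) k ⧸
    Ideal.span ({MvPolynomial.X 0 ^ 2, MvPolynomial.X 0 * MvPolynomial.X 1} :
      Set (MvPolynomial (Fin 2) k))

/-- The image `x` of `X` in `A`. -/
noncomputable def xA : Adef k := Ideal.Quotient.mk _ (MvPolynomial.X 0)

/-- The image `y` of `Y` in `A`. -/
noncomputable def yA : Adef k := Ideal.Quotient.mk _ (MvPolynomial.X 1)

/-- The Fibonacci numbers in the convention `F₀ = 1`, `F₁ = 2`, `Fᵢ = Fᵢ₋₁ + Fᵢ₋₂`. -/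
def myFib : ℕ → ℕ
  | 0 => 1
  | 1 => 2
  | (n+2) => myFib (n+1) + myFib n

/-- `S` is the Zeckendorf representation of `n`: no two consecutive indices, and the
corresponding Fibonacci numbers sum to `n`. -/
def IsZeckRep (S : Finset ℕ) (n : ℕ) : Prop :=
  (∀ i ∈ S, i + 1 ∉ S) ∧ (∑ i ∈ S, myFib i) = n

/-- `n` has even Zeckendorf expansion (the digit `d₀` is `0`). -/
def EvenZ (n : ℕ) : Prop := ∃ S : Finset ℕ, IsZeckRep S n ∧ 0 ∉ S

/-- `n` has odd Zeckendorf expansion (the digit `d₀` is `1`). -/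
def OddZ (n : ℕ) : Prop := ∃ S : Finset ℕ, IsZeckRep S n ∧ 0 ∈ S

/-- `nthE i` is the `(i+1)`-st smallest number with even Zeckendorf expansion;
that is, `e(m) = nthE (m-1)` in the notation of the paper. -/
noncomputable def nthE : ℕ → ℕ := Nat.nth EvenZ

lemma myFib_pos : ∀ n, 0 < myFib n
  | 0 => Nat.one_pos
  | 1 => Nat.zero_lt_two
  | (n+2) => Nat.add_pos_left (myFib_pos (n+1)) _

lemma myFib_strictMono : StrictMono myFib := by
  apply strictMono_nat_of_lt_succ
  intro n
  match n with
  | 0 => exact Nat.one_lt_two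
  | (m+1) => exact Nat.lt_add_of_pos_right (myFib_pos m)

lemma evenZ_myFib (i : ℕ) (hi : 1 ≤ i) : EvenZ (myFib i) := by
  refine ⟨{i}, ⟨?_, ?_⟩, ?_⟩
  · intro j hj
    simp only [Finset.mem_singleton] at hj ⊢
    omega
  · simp
  · simp only [Finset.mem_singleton]
    omega

lemma evenZ_infinite : {n : ℕ | EvenZ n}.Infinite := by
  apply Set.infinite_of_injective_forall_mem (f := fun i : ℕ => myFib (i + 1))
  · intro a b hab
    have := myFib_strictMono.injective hab
    omega
  · intro i
    exact evenZ_myFib (i + 1) (Nat.succ_le_succ (Nat.zero_le i))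

lemma nthE_injective : Function.Injective nthE :=
  Nat.nth_injective evenZ_infinite


open Classical in
/-- The entries of the matrix `∂` (rows and columns indexed by positive integers):
row `i` has `x` in column `e(i+1)`, and additionally `y` in column `e(i+1)+1` when `i`
has even Zeckendorf expansion.  (Note `e(i+1) = nthE i`.) -/
noncomputable def Dent (i j : ℕ+) : Adef k :=
  if (j : ℕ) = nthE (i : ℕ) then xA k
  else if EvenZ (i : ℕ) ∧ (j : ℕ) = nthE (i : ℕ) + 1 then yA k
  else 0

/-- The action of the matrix `∂` on a finitely supported column vector, as a bare
function: `(∂v)ᵢ = ∑ⱼ ∂ᵢⱼ vⱼ`. -/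
noncomputable def Dapp (v : ℕ+ →₀ Adef k) (i : ℕ+) : Adef k :=
  v.sum fun j a => Dent k i j * a

/-- An a priori finite superset of the support of `∂v`. -/
noncomputable def candSet (v : ℕ+ →₀ Adef k) : Set ℕ+ :=
  (fun i : ℕ+ => nthE (i : ℕ)) ⁻¹'
    (((fun j : ℕ+ => (j : ℕ)) '' ↑v.support) ∪
      ((fun n : ℕ => n - 1) '' ((fun j : ℕ+ => (j : ℕ)) '' ↑v.support)))

lemma candSet_finite (v : ℕ+ →₀ Adef k) : (candSet k v).Finite :=
  Set.Finite.preimage ((nthE_injective.comp PNat.coe_injective).injOn)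
    (((v.support.finite_toSet).image _).union
      (((v.support.finite_toSet).image _).image _))

lemma dapp_mem_cand {v : ℕ+ →₀ Adef k} {i : ℕ+} (h : Dapp k v i ≠ 0) :
    i ∈ candSet k v := by
  obtain ⟨j, hj, hne⟩ := Finset.exists_ne_zero_of_sum_ne_zero h
  have hDent : Dent k i j ≠ 0 := by
    intro h0
    apply hne
    show Dent k i j * v j = 0
    rw [h0, zero_mul]
  unfold candSet
  simp only [Set.mem_preimage, Set.mem_union, Set.mem_image, Finset.mem_coe]
  by_cases h1 : (j : ℕ) = nthE (i : ℕ)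
  · exact Or.inl ⟨j, hj, h1⟩
  · by_cases h2 : EvenZ (i : ℕ) ∧ (j : ℕ) = nthE (i : ℕ) + 1
    · obtain ⟨he, hj2⟩ := h2
      refine Or.inr ⟨(j : ℕ), ⟨j, hj, rfl⟩, ?_⟩
      omega
    · exfalso
      apply hDent
      simp only [Dent, if_neg h1, if_neg h2]

/-- The endomorphism `∂` of `A^{(ℕ)}`, given by the matrix with entries `Dent`. -/
noncomputable def Dlin : (ℕ+ →₀ Adef k) →ₗ[Adef k] (ℕ+ →₀ Adef k) where
  toFun v := Finsupp.onFinset (candSet_finite k v).toFinset (fun i => Dapp k v i)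
    (fun i hi => (Set.Finite.mem_toFinset _).mpr (dapp_mem_cand k hi))
  map_add' v w := by
    ext i
    simp only [Finsupp.onFinset_apply, Finsupp.add_apply]
    unfold Dapp
    rw [Finsupp.sum_add_index' (fun j => mul_zero _) (fun j a b => mul_add _ a b)]
  map_smul' a v := by
    ext i
    simp only [Finsupp.onFinset_apply, Finsupp.smul_apply, smul_eq_mul, RingHom.id_apply]
    unfold Dapp
    rw [Finsupp.sum_smul_index (fun j => mul_zero _), Finsupp.mul_sum]
    apply Finsupp.sum_congr
    intro j _
    ring

/-- The upper-left `n × n` corner `∂ₙ` of the matrix `∂` (recall that rows and columns of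
`∂` are indexed by the positive integers). -/
noncomputable def Dmat (n : ℕ) : Matrix (Fin n) (Fin n) (Adef k) :=
  fun i j => Dent k ⟨(i : ℕ) + 1, Nat.succ_pos _⟩ ⟨(j : ℕ) + 1, Nat.succ_pos _⟩


section Homology

variable {R M N : Type u} [CommRing R] [AddCommGroup M] [Module R M]
  [AddCommGroup N] [Module R N]

/-- The homology `ker d / im d` of a differential module `(M, d)`. -/
abbrev homologyOf (d : M →ₗ[R] M) : Type u :=
  LinearMap.ker d ⧸ (LinearMap.range d).comap (LinearMap.ker d).subtype

lemma mapsTo_ker {d₁ : M →ₗ[R] M} {d₂ : N →ₗ[R] N} {f : M →ₗ[R] N}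
    (h : f ∘ₗ d₁ = d₂ ∘ₗ f) : ∀ x ∈ LinearMap.ker d₁, f x ∈ LinearMap.ker d₂ := by
  intro x hx
  rw [LinearMap.mem_ker] at hx ⊢
  have h1 : f (d₁ x) = d₂ (f x) := LinearMap.congr_fun h x
  rw [← h1, hx, map_zero]

/-- The map induced on homology by a morphism of differential modules. -/
noncomputable def hMap (d₁ : M →ₗ[R] M) (d₂ : N →ₗ[R] N) (f : M →ₗ[R] N)
    (h : f ∘ₗ d₁ = d₂ ∘ₗ f) : homologyOf d₁ →ₗ[R] homologyOf d₂ := by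
  refine Submodule.mapQ _ _ (f.restrict (mapsTo_ker h)) ?_
  intro x hx
  rw [Submodule.mem_comap] at hx ⊢
  rw [Submodule.mem_comap]
  obtain ⟨u, hu⟩ := hx
  show f ↑x ∈ LinearMap.range d₂
  exact ⟨f u, ((LinearMap.congr_fun h u).symm).trans (congrArg f hu)⟩

end Homology


/-- The morphism `φ : A^{(ℕ)} → A`, `v ↦ y·v₁`. -/
noncomputable def phi : (ℕ+ →₀ Adef k) →ₗ[Adef k] Adef k :=
  yA k • Finsupp.lapply (1 : ℕ+)

/-- Multiplication by `x`, as a differential on `A`. -/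
noncomputable def xmul : Adef k →ₗ[Adef k] Adef k :=
  xA k • LinearMap.id



section Aux
variable (k : Type u) [CommRing k]


-- x² = 0
lemma xx : xA k * xA k = 0 := by
  rw [xA, ← map_mul, ← pow_two]
  exact Ideal.Quotient.eq_zero_iff_mem.2 (Ideal.subset_span (by simp))

lemma xy : xA k * yA k = 0 := by
  rw [xA, yA, ← map_mul]
  exact Ideal.Quotient.eq_zero_iff_mem.2 (Ideal.subset_span (by simp))

/-- The algebra map `A → k[Y]`, `x ↦ 0`, `y ↦ Y`. -/
noncomputable def piA : Adef k →ₐ[k] Polynomial k :=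
  Ideal.Quotient.liftₐ _ (MvPolynomial.aeval ![0, Polynomial.X]) (by
    intro a ha
    refine Submodule.span_induction ?_ ?_ ?_ ?_ ha
    · rintro p hp
      simp only [Set.mem_insert_iff, Set.mem_singleton_iff] at hp
      rcases hp with rfl | rfl <;> simp
    · simp
    · intro p q _ _ hp hq; simp [hp, hq]
    · intro c p _ hp
      simp only [smul_eq_mul, map_mul, hp, mul_zero])

/-- The algebra map `A → k[ε]`, `x ↦ ε`, `y ↦ 0`. -/
noncomputable def muA : Adef k →ₐ[k] DualNumber k :=
  Ideal.Quotient.liftₐ _ (MvPolynomial.aeval ![DualNumber.eps, 0]) (by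
    intro a ha
    refine Submodule.span_induction ?_ ?_ ?_ ?_ ha
    · rintro p hp
      simp only [Set.mem_insert_iff, Set.mem_singleton_iff] at hp
      rcases hp with rfl | rfl <;>
        simp [pow_two, DualNumber.eps_mul_eps]
    · simp
    · intro p q _ _ hp hq; simp [hp, hq]
    · intro c p _ hp
      simp only [smul_eq_mul, map_mul, hp, mul_zero])

lemma piA_x : piA k (xA k) = 0 := by
  show (MvPolynomial.aeval ![0, Polynomial.X]) (MvPolynomial.X 0) = (0 : Polynomial k)
  simp

lemma piA_y : piA k (yA k) = Polynomial.X := by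
  show (MvPolynomial.aeval ![0, Polynomial.X]) (MvPolynomial.X 1) = (Polynomial.X : Polynomial k)
  simp

lemma muA_x : muA k (xA k) = DualNumber.eps := by
  show (MvPolynomial.aeval ![DualNumber.eps, 0]) (MvPolynomial.X 0) = (DualNumber.eps : DualNumber k)
  simp

lemma muA_y : muA k (yA k) = 0 := by
  show (MvPolynomial.aeval ![DualNumber.eps, 0]) (MvPolynomial.X 1) = (0 : DualNumber k)
  simp






lemma yx : yA k * xA k = 0 := by rw [mul_comm]; exact xy k

lemma ypow_mul_x (n : ℕ) (hn : 1 ≤ n) : yA k ^ n * xA k = 0 := by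
  obtain ⟨m, rfl⟩ : ∃ m, n = m + 1 := ⟨n - 1, by omega⟩
  rw [show yA k ^ (m+1) = yA k ^ m * yA k from pow_succ _ _, mul_assoc, yx, mul_zero]

lemma aeval_y_mul_x (p : Polynomial k) :
    Polynomial.aeval (yA k) p * xA k = p.coeff 0 • xA k := by
  induction p using Polynomial.induction_on' with
  | add p q hp hq => rw [map_add, add_mul, hp, hq, Polynomial.coeff_add, add_smul]
  | monomial n a =>
    rw [Polynomial.aeval_monomial, Polynomial.coeff_monomial]
    rcases Nat.eq_zero_or_pos n with rfl | hn
    · rw [if_pos rfl, pow_zero, mul_one]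
      exact (Algebra.smul_def a (xA k)).symm
    · rw [mul_assoc, ypow_mul_x k n hn, mul_zero, if_neg (by omega), zero_smul]

lemma inj0 (c : k) (p : Polynomial k)
    (h : c • xA k + Polynomial.aeval (yA k) p = 0) : c = 0 ∧ p = 0 := by
  have hp : p = 0 := by
    have h2 := congrArg (piA k) h
    rw [map_add, map_smul, piA_x, smul_zero, zero_add, ← Polynomial.aeval_algHom_apply,
      piA_y, map_zero, Polynomial.aeval_X_left_apply] at h2
    exact h2
  subst hp
  refine ⟨?_, rfl⟩
  rw [map_zero, add_zero] at h
  have h3 := congrArg (muA k) h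
  rw [map_smul, muA_x, map_zero] at h3
  have h4 := congrArg TrivSqZeroExt.snd h3
  simpa using h4

lemma cf (z : Adef k) :
    ∃ (c : k) (p : Polynomial k), z = c • xA k + Polynomial.aeval (yA k) p := by
  obtain ⟨f, rfl⟩ := Ideal.Quotient.mk_surjective z
  induction f using MvPolynomial.induction_on with
  | C a => exact ⟨0, Polynomial.C a, by
      rw [zero_smul, zero_add, Polynomial.aeval_C, ← MvPolynomial.algebraMap_eq]
      rfl⟩
  | add p q hp hq =>
    obtain ⟨c1, p1, h1⟩ := hp
    obtain ⟨c2, p2, h2⟩ := hq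
    exact ⟨c1 + c2, p1 + p2, by rw [map_add, h1, h2, map_add, add_smul]; ring⟩
  | mul_X f n hf =>
    obtain ⟨c, p, h⟩ := hf
    rw [map_mul, h]
    fin_cases n
    · refine ⟨p.coeff 0, 0, ?_⟩
      show (c • xA k + Polynomial.aeval (yA k) p) * (xA k) = _
      rw [add_mul, smul_mul_assoc, xx, smul_zero, zero_add, aeval_y_mul_x, map_zero,
        add_zero]
    · refine ⟨0, Polynomial.X * p, ?_⟩
      show (c • xA k + Polynomial.aeval (yA k) p) * (yA k) = _
      rw [add_mul, smul_mul_assoc, xy, smul_zero, zero_add, map_mul,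
        Polynomial.aeval_X, zero_smul, zero_add, mul_comm]






lemma X_mul_cancel {p : Polynomial k} (h : Polynomial.X * p = 0) : p = 0 := by
  ext n
  have := congrArg (fun q => Polynomial.coeff q (n + 1)) h
  simpa [Polynomial.coeff_X_mul] using this

lemma smul_x_inj {c : k} (h : c • xA k = 0) : c = 0 :=
  (inj0 k c 0 (by rwa [map_zero, add_zero])).1

lemma x_mul_eq (z : Adef k) : ∃ c : k, xA k * z = c • xA k := by
  obtain ⟨c, p, rfl⟩ := cf k z
  refine ⟨p.coeff 0, ?_⟩
  rw [mul_comm, add_mul, smul_mul_assoc, xx, smul_zero, zero_add, aeval_y_mul_x]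

lemma y_mul_eq (b : Adef k) : ∃ q : Polynomial k,
    yA k * b = Polynomial.aeval (yA k) (Polynomial.X * q) := by
  obtain ⟨c, p, rfl⟩ := cf k b
  refine ⟨p, ?_⟩
  rw [mul_add, mul_smul_comm, yx, smul_zero, zero_add, map_mul, Polynomial.aeval_X]

lemma split_xy {a b : Adef k} (h : xA k * a + yA k * b = 0) :
    xA k * a = 0 ∧ yA k * b = 0 := by
  obtain ⟨c, hc⟩ := x_mul_eq k a
  obtain ⟨q, hq⟩ := y_mul_eq k b
  rw [hc, hq] at h
  obtain ⟨h1, h2⟩ := inj0 k c _ h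
  rw [hc, hq, h1, h2, zero_smul, map_zero]
  exact ⟨rfl, rfl⟩

lemma y_mul_eq_zero {a : Adef k} (h : yA k * a = 0) : ∃ c : k, a = c • xA k := by
  obtain ⟨c, p, rfl⟩ := cf k a
  refine ⟨c, ?_⟩
  have hh : yA k * Polynomial.aeval (yA k) p = Polynomial.aeval (yA k) (Polynomial.X * p) := by
    rw [map_mul, Polynomial.aeval_X]
  rw [mul_add, mul_smul_comm, yx, smul_zero, zero_add, hh] at h
  obtain ⟨-, h2⟩ := inj0 k 0 (Polynomial.X * p) (by rwa [zero_smul, zero_add])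
  have hp : p = 0 := X_mul_cancel k h2
  subst hp
  rw [map_zero, add_zero]

lemma y_mul_smul_x {a : Adef k} {c : k} (h : yA k * a = c • xA k) : yA k * a = 0 := by
  obtain ⟨q, hq⟩ := y_mul_eq k a
  rw [hq] at h ⊢
  have : c • xA k + Polynomial.aeval (yA k) (Polynomial.X * (-q)) = 0 := by
    rw [mul_neg, map_neg, ← h, add_neg_cancel]
  obtain ⟨h1, h2⟩ := inj0 k c _ this
  have : q = 0 := by
    have := X_mul_cancel k (p := -q) h2
    simpa using this
  rw [this, mul_zero, map_zero]

lemma x_mul_zero_form {z : Adef k} (h : xA k * z = 0) :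
    ∃ (c : k) (b : Adef k), z = c • xA k + yA k * b := by
  obtain ⟨c, p, rfl⟩ := cf k z
  rw [mul_comm, add_mul, smul_mul_assoc, xx, smul_zero, zero_add, aeval_y_mul_x] at h
  have h0 : p.coeff 0 = 0 := smul_x_inj k h
  obtain ⟨q, rfl⟩ := (Polynomial.X_dvd_iff).2 h0
  exact ⟨c, Polynomial.aeval (yA k) q, by rw [map_mul, Polynomial.aeval_X]⟩

lemma mem_span_x_iff {w : Adef k} : w ∈ Ideal.span {xA k} ↔ ∃ c : k, w = c • xA k := by
  constructor
  · intro h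
    obtain ⟨u, hu⟩ := Ideal.mem_span_singleton.1 h
    obtain ⟨c, hc⟩ := x_mul_eq k u
    exact ⟨c, by rw [hu, hc]⟩
  · rintro ⟨c, rfl⟩
    have hx : xA k ∈ Ideal.span {xA k} := Ideal.mem_span_singleton_self (xA k)
    rw [show c • xA k = algebraMap k (Adef k) c * xA k from Algebra.smul_def c (xA k)]
    exact Ideal.mul_mem_left _ _ hx



end Aux

noncomputable local instance : DecidablePred EvenZ := fun _ => Classical.propDecidable _

lemma myFib_ge (n : ℕ) : n + 1 ≤ myFib n := by
  induction n using Nat.strong_induction_on with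
  | _ n IH =>
    match n with
    | 0 => exact le_refl 1
    | 1 => exact le_refl 2
    | (m+2) =>
      have h1 := IH (m+1) (by omega)
      have h2 := IH m (by omega)
      show m + 3 ≤ myFib (m+1) + myFib m
      omega

/-- Z1: sum of non-consecutive Fibonacci numbers with indices `< n` is `< myFib n`. -/
lemma zeck_sum_lt : ∀ (n : ℕ) (S : Finset ℕ), (∀ i ∈ S, i + 1 ∉ S) →
    (∀ i ∈ S, i < n) → ∑ i ∈ S, myFib i < myFib n := by
  intro n
  induction n using Nat.strong_induction_on with
  | _ n IH =>
    intro S hS hb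
    match n with
    | 0 =>
      have : S = ∅ := Finset.eq_empty_of_forall_notMem (fun i hi => by have := hb i hi; omega)
      simp [this, myFib_pos]
    | 1 =>
      have hsub : S ⊆ {0} := fun i hi => by
        simp only [Finset.mem_singleton]; have := hb i hi; omega
      calc ∑ i ∈ S, myFib i ≤ ∑ i ∈ ({0} : Finset ℕ), myFib i :=
            Finset.sum_le_sum_of_subset hsub
        _ = 1 := by simp [myFib]
        _ < 2 := one_lt_two
    | (m+2) =>
      by_cases hm : m + 1 ∈ S
      · have hsum := Finset.add_sum_erase S myFib hm
        have herase_b : ∀ i ∈ S.erase (m+1), i < m := by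
          intro i hi
          obtain ⟨hne, hiS⟩ := Finset.mem_erase.1 hi
          have h1 := hb i hiS
          have h2 : i ≠ m := by
            intro h; subst h
            exact hS i hiS hm
          omega
        have herase_s : ∀ i ∈ S.erase (m+1), i + 1 ∉ S.erase (m+1) :=
          fun i hi h => hS i (Finset.mem_of_mem_erase hi) (Finset.mem_of_mem_erase h)
        have hlt := IH m (by omega) _ herase_s herase_b
        show ∑ i ∈ S, myFib i < myFib (m+1) + myFib m
        omega
      · have hb' : ∀ i ∈ S, i < m + 1 := by
          intro i hi
          have := hb i hi
          rcases Nat.lt_or_ge i (m+1) with h | h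
          · exact h
          · exfalso; have : i = m + 1 := by omega
            exact hm (this ▸ hi)
        have := IH (m+1) (by omega) S hS hb'
        have hmono : myFib (m+1) < myFib (m+2) := myFib_strictMono (by omega)
        omega

/-- interval bounds from the maximum element of a Zeckendorf rep -/
lemma zeck_bounds {S : Finset ℕ} {n : ℕ} (h : IsZeckRep S n) (hne : S.Nonempty) :
    myFib (S.max' hne) ≤ n ∧ n < myFib (S.max' hne + 1) := by
  obtain ⟨hS, hsum⟩ := h
  constructor
  · rw [← hsum]
    exact Finset.single_le_sum (fun i _ => Nat.zero_le _) (S.max'_mem hne)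
  · rw [← hsum]
    exact zeck_sum_lt _ S hS (fun i hi => by
      have := S.le_max' i hi; omega)

/-- Z3: uniqueness of Zeckendorf representations. -/
lemma zeck_unique : ∀ (n : ℕ) (S T : Finset ℕ),
    IsZeckRep S n → IsZeckRep T n → S = T := by
  intro n
  induction n using Nat.strong_induction_on with
  | _ n IH =>
    intro S T hS hT
    rcases S.eq_empty_or_nonempty with rfl | hSne
    · rcases T.eq_empty_or_nonempty with rfl | hTne
      · rfl
      · exfalso
        have h0 : n = 0 := by simpa using hS.2.symm
        have := hT.2
        have hpos : 0 < ∑ i ∈ T, myFib i :=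
          Finset.sum_pos (fun i _ => myFib_pos i) hTne
        omega
    · rcases T.eq_empty_or_nonempty with rfl | hTne
      · exfalso
        have h0 : n = 0 := by simpa using hT.2.symm
        have hpos : 0 < ∑ i ∈ S, myFib i :=
          Finset.sum_pos (fun i _ => myFib_pos i) hSne
        have := hS.2
        omega
      · -- both nonempty, equal maxima
        have hSb := zeck_bounds hS hSne
        have hTb := zeck_bounds hT hTne
        have hmaxeq : S.max' hSne = T.max' hTne := by
          by_contra hne
          rcases Nat.lt_or_ge (S.max' hSne) (T.max' hTne) with h | h
          · have : myFib (S.max' hSne + 1) ≤ myFib (T.max' hTne) :=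
              myFib_strictMono.monotone (by omega)
            omega
          · have hlt : T.max' hTne < S.max' hSne := by omega
            have : myFib (T.max' hTne + 1) ≤ myFib (S.max' hSne) :=
              myFib_strictMono.monotone (by omega)
            omega
        set i := S.max' hSne with hi
        have hiS : i ∈ S := S.max'_mem hSne
        have hiT : i ∈ T := hmaxeq ▸ T.max'_mem hTne
        have hpos : 0 < myFib i := myFib_pos i
        have hle : myFib i ≤ n := hSb.1
        have hSsum := Finset.add_sum_erase S myFib hiS
        have hTsum := Finset.add_sum_erase T myFib hiT
        have hSE : IsZeckRep (S.erase i) (n - myFib i) := by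
          refine ⟨fun a ha hb => hS.1 a (Finset.mem_of_mem_erase ha) (Finset.mem_of_mem_erase hb), ?_⟩
          have := hS.2
          omega
        have hTE : IsZeckRep (T.erase i) (n - myFib i) := by
          refine ⟨fun a ha hb => hT.1 a (Finset.mem_of_mem_erase ha) (Finset.mem_of_mem_erase hb), ?_⟩
          have := hT.2
          omega
        have heq := IH (n - myFib i) (by omega) _ _ hSE hTE
        have : insert i (S.erase i) = insert i (T.erase i) := by rw [heq]
        rwa [Finset.insert_erase hiS, Finset.insert_erase hiT] at this

/-- Z2: existence of Zeckendorf representations. -/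
lemma zeck_exists : ∀ n : ℕ, ∃ S, IsZeckRep S n := by
  intro n
  induction n using Nat.strong_induction_on with
  | _ n IH =>
    rcases Nat.eq_zero_or_pos n with rfl | hn
    · exact ⟨∅, fun i hi => absurd hi (Finset.notMem_empty i), by simp⟩
    · have hP0 : myFib 0 ≤ n := hn
      obtain ⟨i, hPi, hupper⟩ : ∃ i, myFib i ≤ n ∧ n < myFib (i + 1) := by
        refine ⟨Nat.findGreatest (fun i => myFib i ≤ n) n, ?_, ?_⟩
        · exact Nat.findGreatest_spec (P := fun i => myFib i ≤ n) (Nat.zero_le n) hP0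
        · by_cases hc : Nat.findGreatest (fun i => myFib i ≤ n) n + 1 ≤ n
          · have := Nat.findGreatest_is_greatest (P := fun i => myFib i ≤ n)
              (Nat.lt_succ_self _) hc
            simp only [Nat.succ_eq_add_one] at this
            omega
          · have := myFib_ge (Nat.findGreatest (fun i => myFib i ≤ n) n + 1)
            omega
      rcases Nat.eq_zero_or_pos i with hi0 | hipos
      · -- i = 0 : n = 1
        subst hi0
        have hn1 : n = 1 := by
          have h1 : myFib 0 = 1 := rfl
          have h2 : myFib (0 + 1) = 2 := rfl
          omega
        refine ⟨{0}, ⟨?_, ?_⟩⟩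
        · intro a ha
          simp only [Finset.mem_singleton] at ha ⊢
          omega
        · simp [hn1, show myFib 0 = 1 from rfl]
      · -- i ≥ 1
        obtain ⟨t, rfl⟩ : ∃ t, i = t + 1 := ⟨i - 1, by omega⟩
        have hrec : myFib (t + 1 + 1) = myFib (t+1) + myFib t := rfl
        have hmlt : n - myFib (t+1) < myFib t := by omega
        obtain ⟨S', hS'⟩ := IH (n - myFib (t+1)) (by
          have h1 := myFib_pos (t+1)
          have h2 : myFib (t+1) ≤ n := hPi
          omega)
        have hS'small : ∀ j ∈ S', j < t := by
          intro j hj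
          by_contra hge
          have h1 : myFib t ≤ myFib j := myFib_strictMono.monotone (by omega)
          have h2 : myFib j ≤ ∑ a ∈ S', myFib a :=
            Finset.single_le_sum (fun a _ => Nat.zero_le _) hj
          have h3 := hS'.2
          omega
        have hnotmem : (t+1) ∉ S' := fun h => by have := hS'small _ h; omega
        refine ⟨insert (t+1) S', ⟨?_, ?_⟩⟩
        · intro a ha
          rcases Finset.mem_insert.1 ha with rfl | haS
          · intro hb
            rcases Finset.mem_insert.1 hb with heq | hbS
            · omega
            · have := hS'small _ hbS; omega
          · intro hb
            rcases Finset.mem_insert.1 hb with heq | hbS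
            · have := hS'small _ haS; omega
            · exact hS'.1 a haS hbS
        · rw [Finset.sum_insert hnotmem, hS'.2]
          have : myFib (t+1) ≤ n := hPi
          omega

lemma evenZ_or_oddZ (n : ℕ) : EvenZ n ∨ OddZ n := by
  obtain ⟨S, hS⟩ := zeck_exists n
  by_cases h : 0 ∈ S
  · exact Or.inr ⟨S, hS, h⟩
  · exact Or.inl ⟨S, hS, h⟩

lemma not_evenZ_and_oddZ (n : ℕ) : ¬(EvenZ n ∧ OddZ n) := by
  rintro ⟨⟨S, hS, h0S⟩, ⟨T, hT, h0T⟩⟩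
  exact h0S ((zeck_unique n S T hS hT) ▸ h0T)

lemma oddZ_iff_not_evenZ (n : ℕ) : OddZ n ↔ ¬EvenZ n := by
  constructor
  · intro h he
    exact not_evenZ_and_oddZ n ⟨he, h⟩
  · intro h
    rcases evenZ_or_oddZ n with he | ho
    · exact absurd he h
    · exact ho

lemma evenZ_zero : EvenZ 0 :=
  ⟨∅, ⟨fun i hi => absurd hi (Finset.notMem_empty i), by simp⟩, Finset.notMem_empty 0⟩

lemma not_evenZ_one : ¬ EvenZ 1 := by
  rintro ⟨S, ⟨hS, hsum⟩, h0⟩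
  have hne : S.Nonempty := by
    rcases S.eq_empty_or_nonempty with rfl | h
    · simp at hsum
    · exact h
  obtain ⟨j, hj⟩ := hne
  have hj1 : 1 ≤ j := by
    rcases Nat.eq_zero_or_pos j with rfl | h
    · exact absurd hj h0
    · exact h
  have h1 : myFib 1 ≤ myFib j := myFib_strictMono.monotone hj1
  have h2 : myFib j ≤ ∑ i ∈ S, myFib i := Finset.single_le_sum (fun a _ => Nat.zero_le _) hj
  have h3 : myFib 1 = 2 := rfl
  omega

lemma evenZ_two : EvenZ 2 := by
  have := evenZ_myFib 1 le_rfl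
  simpa [show myFib 1 = 2 from rfl] using this

lemma count_one : Nat.count EvenZ 1 = 1 := by
  rw [Nat.count_succ, Nat.count_zero, if_pos evenZ_zero]

lemma count_two : Nat.count EvenZ 2 = 1 := by
  rw [Nat.count_succ, count_one, if_neg not_evenZ_one]

lemma count_pos {n : ℕ} (hn : 1 ≤ n) : 1 ≤ Nat.count EvenZ n :=
  le_trans (le_of_eq count_one.symm) (Nat.count_monotone EvenZ hn)

/-- If the max of a rep produces bounds matching `t`, the max is `t`. -/
lemma zeck_max_eq {S : Finset ℕ} {n : ℕ} (h : IsZeckRep S n) (hne : S.Nonempty)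
    (t : ℕ) (h1 : myFib t ≤ n) (h2 : n < myFib (t+1)) : S.max' hne = t := by
  obtain ⟨hb1, hb2⟩ := zeck_bounds h hne
  by_contra hc
  rcases Nat.lt_or_ge (S.max' hne) t with hlt | hge
  · have : myFib (S.max' hne + 1) ≤ myFib t := myFib_strictMono.monotone (by omega)
    omega
  · have hgt : t < S.max' hne := by omega
    have : myFib (t + 1) ≤ myFib (S.max' hne) := myFib_strictMono.monotone (by omega)
    omega

/-- Z6: shifting by a leading Fibonacci number preserves even-Zeckendorf-ness. -/
lemma shift_evenZ (t m : ℕ) (hm : m < myFib t) :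
    EvenZ (myFib (t+1) + m) ↔ EvenZ m := by
  constructor
  · rintro ⟨T, hT, h0T⟩
    have hne : T.Nonempty := by
      rcases T.eq_empty_or_nonempty with rfl | h
      · exfalso
        have h2 := hT.2
        simp only [Finset.sum_empty] at h2
        have := myFib_pos (t+1)
        omega
      · exact h
    have hmax : T.max' hne = t + 1 := by
      apply zeck_max_eq hT hne
      · omega
      · have : myFib (t+1+1) = myFib (t+1) + myFib t := rfl
        omega
    have hmem : t + 1 ∈ T := hmax ▸ T.max'_mem hne
    refine ⟨T.erase (t+1), ⟨?_, ?_⟩, ?_⟩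
    · exact fun a ha hb => hT.1 a (Finset.mem_of_mem_erase ha) (Finset.mem_of_mem_erase hb)
    · have := Finset.add_sum_erase T myFib hmem
      have := hT.2
      omega
    · intro h
      exact h0T (Finset.mem_of_mem_erase h)
  · rintro ⟨S, hS, h0S⟩
    have hsmall : ∀ j ∈ S, j < t := by
      intro j hj
      by_contra hge
      have h1 : myFib t ≤ myFib j := myFib_strictMono.monotone (by omega)
      have h2 : myFib j ≤ ∑ a ∈ S, myFib a :=
        Finset.single_le_sum (fun a _ => Nat.zero_le _) hj
      have h3 := hS.2
      omega
    have hnm : (t+1) ∉ S := fun h => by have := hsmall _ h; omega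
    refine ⟨insert (t+1) S, ⟨?_, ?_⟩, ?_⟩
    · intro a ha
      rcases Finset.mem_insert.1 ha with rfl | haS
      · intro hb
        rcases Finset.mem_insert.1 hb with heq | hbS
        · omega
        · have := hsmall _ hbS; omega
      · intro hb
        rcases Finset.mem_insert.1 hb with heq | hbS
        · have := hsmall _ haS; omega
        · exact hS.1 a haS hbS
    · rw [Finset.sum_insert hnm, hS.2]
    · intro h
      rcases Finset.mem_insert.1 h with h' | h'
      · omega
      · exact h0S h'

/-- counting across a shifted block -/
lemma count_shift (t : ℕ) : ∀ m, m ≤ myFib t →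
    Nat.count EvenZ (myFib (t+1) + m) =
      Nat.count EvenZ (myFib (t+1)) + Nat.count EvenZ m := by
  intro m
  induction m with
  | zero => simp
  | succ m IH =>
    intro hm
    have hm' : m < myFib t := by omega
    have h1 : myFib (t+1) + (m+1) = (myFib (t+1) + m) + 1 := by omega
    rw [h1, Nat.count_succ, IH (by omega), Nat.count_succ]
    have : EvenZ (myFib (t+1) + m) ↔ EvenZ m := shift_evenZ t m hm'
    by_cases h : EvenZ m
    · rw [if_pos h, if_pos (this.2 h)]
      omega
    · rw [if_neg h, if_neg (fun hh => h (this.1 hh))]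
      omega

lemma count_myFib : ∀ t, Nat.count EvenZ (myFib (t+1)) = myFib t := by
  intro t
  induction t using Nat.strong_induction_on with
  | _ t IH =>
    match t with
    | 0 => exact count_two
    | 1 =>
      show Nat.count EvenZ 3 = 2
      rw [Nat.count_succ, count_two, if_pos evenZ_two]
    | (s+2) =>
      have hrec : myFib (s+2+1) = myFib (s+1+1) + myFib (s+1) := rfl
      rw [hrec, count_shift (s+1) (myFib (s+1)) le_rfl, IH (s+1) (by omega)]
      have : myFib s ≤ myFib (s+1) := myFib_strictMono.monotone (by omega)
      have h2 := count_shift s (myFib s) le_rfl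
      rw [IH s (by omega)]
      rfl

lemma zero_mem_image_iff {S : Finset ℕ} (h0 : 0 ∉ S) :
    0 ∈ S.image (· - 1) ↔ 1 ∈ S := by
  simp only [Finset.mem_image]
  constructor
  · rintro ⟨j, hj, hj0⟩
    have : j ≠ 0 := fun h => h0 (h ▸ hj)
    have : j = 1 := by omega
    exact this ▸ hj
  · intro h1
    exact ⟨1, h1, rfl⟩

/-- Z8 (master lemma): the Zeckendorf representation of `count EvenZ n` for even-Z `n`
is the shift-down of that of `n`. -/
lemma count_rep : ∀ (n : ℕ) (S : Finset ℕ), IsZeckRep S n → 0 ∉ S →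
    IsZeckRep (S.image (· - 1)) (Nat.count EvenZ n) := by
  intro n
  induction n using Nat.strong_induction_on with
  | _ n IH =>
    intro S hS h0S
    rcases S.eq_empty_or_nonempty with rfl | hne
    · have hn : n = 0 := by simpa using hS.2.symm
      subst hn
      refine ⟨fun i hi => absurd hi (by simp), by simp⟩
    · have hiS : S.max' hne ∈ S := S.max'_mem hne
      have hipos : 1 ≤ S.max' hne := by
        rcases Nat.eq_zero_or_pos (S.max' hne) with h | h
        · exact absurd (h ▸ hiS) h0S
        · exact h
      obtain ⟨t, ht⟩ : ∃ t, S.max' hne = t + 1 := ⟨S.max' hne - 1, by omega⟩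
      have hmem : t + 1 ∈ S := ht ▸ hiS
      have herase_b : ∀ j ∈ S.erase (t+1), j < t := by
        intro j hj
        obtain ⟨hne', hjS⟩ := Finset.mem_erase.1 hj
        have h1 : j ≤ t + 1 := ht ▸ S.le_max' j hjS
        have h2 : j ≠ t := by
          intro h; subst h
          exact hS.1 j hjS hmem
        omega
      have herase_ncs : ∀ j ∈ S.erase (t+1), j + 1 ∉ S.erase (t+1) :=
        fun a ha hb => hS.1 a (Finset.mem_of_mem_erase ha) (Finset.mem_of_mem_erase hb)
      have hsum := Finset.add_sum_erase S myFib hmem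
      have hmlt : ∑ j ∈ S.erase (t+1), myFib j < myFib t :=
        zeck_sum_lt t _ herase_ncs herase_b
      set m := ∑ j ∈ S.erase (t+1), myFib j with hmdef
      have hnm : n = myFib (t+1) + m := by
        have := hS.2
        omega
      have hcount : Nat.count EvenZ n = myFib t + Nat.count EvenZ m := by
        rw [hnm, count_shift t m (by omega), count_myFib]
      have hrepm : IsZeckRep (S.erase (t+1)) m := ⟨herase_ncs, rfl⟩
      have h0m : 0 ∉ S.erase (t+1) := fun h => h0S (Finset.mem_of_mem_erase h)
      have hIH := IH m (by
        have := myFib_pos (t+1)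
        omega) _ hrepm h0m
      -- the image splits
      have himg : S.image (· - 1) = insert t ((S.erase (t+1)).image (· - 1)) := by
        conv_lhs => rw [← Finset.insert_erase hmem]
        rw [Finset.image_insert]
        norm_num
      have htnm : t ∉ (S.erase (t+1)).image (· - 1) := by
        intro h
        obtain ⟨j, hj, hjt⟩ := Finset.mem_image.1 h
        have := herase_b j hj
        omega
      rw [himg, hcount]
      constructor
      · intro a ha
        rcases Finset.mem_insert.1 ha with rfl | haI
        · intro hb
          rcases Finset.mem_insert.1 hb with heq | hbI
          · omega
          · obtain ⟨j, hj, hjt⟩ := Finset.mem_image.1 hbI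
            have := herase_b j hj
            omega
        · obtain ⟨j, hj, hja⟩ := Finset.mem_image.1 haI
          have hj1 : 1 ≤ j := by
            rcases Nat.eq_zero_or_pos j with h | h
            · exact absurd (h ▸ Finset.mem_of_mem_erase hj) h0S
            · exact h
          have hjlt := herase_b j hj
          intro hb
          rcases Finset.mem_insert.1 hb with heq | hbI
          · omega
          · obtain ⟨j', hj', hja'⟩ := Finset.mem_image.1 hbI
            have hj'1 : 1 ≤ j' := by
              rcases Nat.eq_zero_or_pos j' with h | h
              · exact absurd (h ▸ Finset.mem_of_mem_erase hj') h0S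
              · exact h
            have : j' = j + 1 := by omega
            exact hS.1 j (Finset.mem_of_mem_erase hj) (this ▸ Finset.mem_of_mem_erase hj')
      · rw [Finset.sum_insert htnm, hIH.2]

-- consequences ---------------------------------------------------------

lemma evenZ_nthE (i : ℕ) : EvenZ (nthE i) := Nat.nth_mem_of_infinite evenZ_infinite i

lemma count_nthE (i : ℕ) : Nat.count EvenZ (nthE i) = i :=
  Nat.count_nth_of_infinite evenZ_infinite i

lemma nthE_count {n : ℕ} (h : EvenZ n) : nthE (Nat.count EvenZ n) = n := Nat.nth_count h

lemma nthE_mono : StrictMono nthE := Nat.nth_strictMono evenZ_infinite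

lemma nthE_one : nthE 1 = 2 := by
  have := nthE_count evenZ_two
  rwa [count_two] at this

lemma two_le_nthE {i : ℕ} (hi : 1 ≤ i) : 2 ≤ nthE i := by
  have := nthE_mono.monotone hi
  rw [nthE_one] at this
  exact this

/-- ZA: if `i ≥ 1` is even-Zeckendorf then `nthE i + 1` is odd-Zeckendorf. -/
lemma oddZ_nthE_succ {i : ℕ} (hi : 1 ≤ i) (hE : EvenZ i) : OddZ (nthE i + 1) := by
  obtain ⟨S, hS, h0S⟩ := evenZ_nthE i
  have hrep := count_rep (nthE i) S hS h0S
  rw [count_nthE] at hrep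
  obtain ⟨T, hT, h0T⟩ := hE
  have hTeq : S.image (· - 1) = T := zeck_unique i _ _ hrep hT
  have h1S : 1 ∉ S := by
    intro h1
    exact h0T (hTeq ▸ (zero_mem_image_iff h0S).2 h1)
  refine ⟨insert 0 S, ⟨?_, ?_⟩, Finset.mem_insert_self 0 S⟩
  · intro a ha
    rcases Finset.mem_insert.1 ha with rfl | haS
    · intro hb
      rcases Finset.mem_insert.1 hb with heq | hbS
      · omega
      · exact h1S hbS
    · intro hb
      rcases Finset.mem_insert.1 hb with heq | hbS
      · omega
      · exact hS.1 a haS hbS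
  · rw [Finset.sum_insert h0S, hS.2]
    have : myFib 0 = 1 := rfl
    omega

/-- ZB: if `j ≥ 2` is odd-Zeckendorf then `j - 1` is even-Z, its count is even-Z and
positive, and `nthE` of the count recovers `j - 1`. -/
lemma oddZ_pred {j : ℕ} (hj : 2 ≤ j) (h : OddZ j) :
    EvenZ (j-1) ∧ EvenZ (Nat.count EvenZ (j-1)) ∧
      nthE (Nat.count EvenZ (j-1)) = j - 1 ∧ 1 ≤ Nat.count EvenZ (j-1) := by
  obtain ⟨T, hT, h0T⟩ := h
  have h1T : 1 ∉ T := hT.1 0 h0T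
  have hsum := Finset.add_sum_erase T myFib h0T
  have hrepS : IsZeckRep (T.erase 0) (j - 1) := by
    refine ⟨fun a ha hb => hT.1 a (Finset.mem_of_mem_erase ha) (Finset.mem_of_mem_erase hb), ?_⟩
    have := hT.2
    have : myFib 0 = 1 := rfl
    omega
  have h0S : 0 ∉ T.erase 0 := Finset.notMem_erase 0 T
  have hEj1 : EvenZ (j - 1) := ⟨_, hrepS, h0S⟩
  have hrepc := count_rep (j-1) _ hrepS h0S
  have h0img : 0 ∉ (T.erase 0).image (· - 1) := by
    rw [zero_mem_image_iff h0S]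
    intro h1
    exact h1T (Finset.mem_of_mem_erase h1)
  exact ⟨hEj1, ⟨_, hrepc, h0img⟩, nthE_count hEj1, count_pos (by omega)⟩





section DiffMod
variable (k : Type u) [CommRing k]

/-- The column index of the `x` entry in row `i`. -/
noncomputable def colx (i : ℕ+) : ℕ+ :=
  ⟨nthE (i : ℕ), lt_of_lt_of_le Nat.zero_lt_two (two_le_nthE i.property)⟩

/-- The column index of the (potential) `y` entry in row `i`. -/
noncomputable def coly (i : ℕ+) : ℕ+ := ⟨nthE (i : ℕ) + 1, Nat.succ_pos _⟩

lemma colx_coe (i : ℕ+) : ((colx i : ℕ+) : ℕ) = nthE (i : ℕ) := rfl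
lemma coly_coe (i : ℕ+) : ((coly i : ℕ+) : ℕ) = nthE (i : ℕ) + 1 := rfl

open Classical in
lemma Dent_split (i j : ℕ+) :
    Dent k i j = (if j = colx i then xA k else 0) +
      (if EvenZ (i : ℕ) ∧ j = coly i then yA k else 0) := by
  have hxc : (j = colx i) ↔ ((j : ℕ) = nthE (i : ℕ)) := by
    constructor
    · intro h; rw [h]; rfl
    · intro h; exact PNat.coe_injective h
  have hyc : (j = coly i) ↔ ((j : ℕ) = nthE (i : ℕ) + 1) := by
    constructor
    · intro h; rw [h]; rfl
    · intro h; exact PNat.coe_injective h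
  unfold Dent
  by_cases h1 : (j : ℕ) = nthE (i : ℕ)
  · rw [if_pos h1, if_pos (hxc.2 h1)]
    have : ¬(EvenZ (i:ℕ) ∧ j = coly i) := by
      rintro ⟨-, hc⟩
      rw [hyc] at hc
      omega
    rw [if_neg this, add_zero]
  · rw [if_neg h1, if_neg (fun hc => h1 (hxc.1 hc))]
    by_cases h2 : EvenZ (i:ℕ) ∧ (j : ℕ) = nthE (i:ℕ) + 1
    · rw [if_pos h2, if_pos ⟨h2.1, hyc.2 h2.2⟩, zero_add]
    · rw [if_neg h2, if_neg (fun hc => h2 ⟨hc.1, hyc.1 hc.2⟩), add_zero]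

open Classical in
lemma Dapp_eq (v : ℕ+ →₀ Adef k) (i : ℕ+) :
    Dapp k v i = xA k * v (colx i) +
      (if EvenZ (i : ℕ) then yA k * v (coly i) else 0) := by
  unfold Dapp
  rw [Finsupp.sum]
  have hsplit : ∀ j ∈ v.support, Dent k i j * v j =
      (if j = colx i then xA k * v j else 0) +
      (if EvenZ (i : ℕ) then (if j = coly i then yA k * v j else 0) else 0) := by
    intro j _
    rw [Dent_split, add_mul]
    congr 1
    · by_cases h : j = colx i
      · rw [if_pos h, if_pos h]
      · rw [if_neg h, if_neg h, zero_mul]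
    · by_cases hE : EvenZ (i : ℕ)
      · rw [if_pos hE]
        by_cases h : j = coly i
        · rw [if_pos ⟨hE, h⟩, if_pos h]
        · rw [if_neg (fun hc => h hc.2), if_neg h, zero_mul]
      · rw [if_neg hE, if_neg (fun hc => hE hc.1), zero_mul]
  rw [Finset.sum_congr rfl hsplit, Finset.sum_add_distrib]
  congr 1
  · rw [Finset.sum_ite_eq' v.support (colx i) (fun j => xA k * v j)]
    by_cases h : colx i ∈ v.support
    · rw [if_pos h]
    · rw [if_neg h, Finsupp.notMem_support_iff.1 h, mul_zero]
  · by_cases hE : EvenZ (i : ℕ)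
    · simp only [if_pos hE]
      rw [Finset.sum_ite_eq' v.support (coly i) (fun j => yA k * v j)]
      by_cases h : coly i ∈ v.support
      · rw [if_pos h]
      · rw [if_neg h, Finsupp.notMem_support_iff.1 h, mul_zero]
    · simp only [if_neg hE, Finset.sum_const_zero]

lemma Dlin_apply (v : ℕ+ →₀ Adef k) (i : ℕ+) :
    Dlin k v i = xA k * v (colx i) +
      (if EvenZ (i : ℕ) then yA k * v (coly i) else 0) := by
  show Dapp k v i = _
  exact Dapp_eq k v i

end DiffMod


section DiffMod2
variable (k : Type u) [CommRing k]

lemma phi_apply (v : ℕ+ →₀ Adef k) : phi k v = yA k * v 1 := by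
  show yA k • (Finsupp.lapply (1:ℕ+)) v = _
  rw [smul_eq_mul]
  rfl

lemma xmul_apply (z : Adef k) : xmul k z = xA k * z := by
  show xA k • z = _
  rw [smul_eq_mul]

lemma not_evenZ_one_pnat : ¬ EvenZ (((1:ℕ+) : ℕ)) := by
  rw [PNat.one_coe]
  exact not_evenZ_one

lemma hmor_eq : phi k ∘ₗ Dlin k = xmul k ∘ₗ phi k := by
  apply LinearMap.ext
  intro v
  rw [LinearMap.comp_apply, LinearMap.comp_apply, phi_apply, phi_apply, xmul_apply,
    Dlin_apply, if_neg (not_evenZ_one_pnat), add_zero, ← mul_assoc, ← mul_assoc,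
    yx, mul_comm (xA k) (yA k), yx, zero_mul, zero_mul]

lemma one_lt_colx (i : ℕ+) : (1 : ℕ+) ≠ colx i := by
  intro h
  have h1 : ((1:ℕ+) : ℕ) = nthE (i : ℕ) := by rw [h]; rfl
  have h2 : 2 ≤ nthE (i : ℕ) := two_le_nthE i.property
  rw [PNat.one_coe] at h1
  omega

lemma one_lt_coly (i : ℕ+) : (1 : ℕ+) ≠ coly i := by
  intro h
  have h1 : ((1:ℕ+) : ℕ) = nthE (i : ℕ) + 1 := by rw [h]; rfl
  have h2 : 2 ≤ nthE (i : ℕ) := two_le_nthE i.property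
  rw [PNat.one_coe] at h1
  omega

lemma single_ker (b : Adef k) : Dlin k (Finsupp.single (1:ℕ+) b) = 0 := by
  ext i
  rw [Dlin_apply, Finsupp.single_eq_of_ne' (one_lt_colx i), mul_zero]
  rw [Finsupp.single_eq_of_ne' (one_lt_coly i), mul_zero]
  simp

open Classical in
noncomputable def decompA (z : Adef k) : k × Adef k :=
  if z = 0 then (0, 0)
  else if h : ∃ p : k × Adef k, z = p.1 • xA k + yA k * p.2 then h.choose else (0, 0)

lemma decompA_spec {z : Adef k} (h : ∃ p : k × Adef k, z = p.1 • xA k + yA k * p.2) :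
    z = (decompA k z).1 • xA k + yA k * (decompA k z).2 := by
  unfold decompA
  by_cases h0 : z = 0
  · rw [if_pos h0, h0]
    simp
  · rw [if_neg h0, dif_pos h]
    exact h.choose_spec

lemma decompA_zero : decompA k 0 = (0, 0) := by
  unfold decompA
  rw [if_pos rfl]

end DiffMod2


section DiffMod3
variable (k : Type u) [CommRing k]

open Classical in
/-- The coordinates of the candidate preimage `w` of `v` under `∂`. -/
noncomputable def wAux (v : ℕ+ →₀ Adef k) (j : ℕ+) : Adef k :=
  if h2 : 2 ≤ (j : ℕ) then
    if EvenZ (j : ℕ) then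
      (decompA k (v ⟨Nat.count EvenZ (j : ℕ), count_pos (by omega)⟩)).1 • (1 : Adef k)
    else
      (decompA k (v ⟨Nat.count EvenZ ((j : ℕ) - 1), count_pos (by omega)⟩)).2
  else 0

/-- A finite superset of the support of `wAux`. -/
noncomputable def wSet (v : ℕ+ →₀ Adef k) : Finset ℕ+ :=
  v.support.image colx ∪ v.support.image coly

lemma wAux_support (v : ℕ+ →₀ Adef k) (j : ℕ+) (h : wAux k v j ≠ 0) :
    j ∈ wSet k v := by
  unfold wAux at h
  by_cases h2 : 2 ≤ (j : ℕ)
  swap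
  · rw [dif_neg h2] at h
    exact absurd rfl h
  rw [dif_pos h2] at h
  by_cases hE : EvenZ (j : ℕ)
  · rw [if_pos hE] at h
    set R : ℕ+ := ⟨Nat.count EvenZ (j : ℕ), count_pos (by omega)⟩ with hR
    have hvR : v R ≠ 0 := by
      intro hz
      rw [hz, decompA_zero] at h
      exact h (zero_smul _ _)
    apply Finset.mem_union_left
    rw [Finset.mem_image]
    refine ⟨R, Finsupp.mem_support_iff.2 hvR, ?_⟩
    apply PNat.coe_injective
    show nthE ((R : ℕ+) : ℕ) = (j : ℕ)
    exact nthE_count hE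
  · rw [if_neg hE] at h
    have hOdd : OddZ (j : ℕ) := (oddZ_iff_not_evenZ _).2 hE
    obtain ⟨hE1, hE2, hE3, hE4⟩ := oddZ_pred h2 hOdd
    set R : ℕ+ := ⟨Nat.count EvenZ ((j : ℕ) - 1), count_pos (by omega)⟩ with hR
    have hvR : v R ≠ 0 := by
      intro hz
      rw [hz, decompA_zero] at h
      exact h rfl
    apply Finset.mem_union_right
    rw [Finset.mem_image]
    refine ⟨R, Finsupp.mem_support_iff.2 hvR, ?_⟩
    apply PNat.coe_injective
    show nthE ((R : ℕ+) : ℕ) + 1 = (j : ℕ)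
    have : nthE ((R : ℕ+) : ℕ) = (j : ℕ) - 1 := hE3
    omega

/-- The key construction: any cycle `v` with `v₁ ∈ k·x` is a boundary. -/
lemma exists_preimage (v : ℕ+ →₀ Adef k) (hv : Dlin k v = 0)
    (hv1 : ∃ c : k, v 1 = c • xA k) : ∃ w : ℕ+ →₀ Adef k, Dlin k w = v := by
  classical
  -- row conditions from `∂v = 0`
  have hrow : ∀ i : ℕ+, xA k * v (colx i) +
      (if EvenZ (i : ℕ) then yA k * v (coly i) else 0) = 0 := by
    intro i
    have h0 := DFunLike.congr_fun hv i
    rw [Dlin_apply] at h0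
    simpa using h0
  -- v is decomposable at even coordinates
  have hEven : ∀ i : ℕ+, EvenZ (i : ℕ) → xA k * v i = 0 := by
    intro i hE
    have h1 : 1 ≤ (i : ℕ) := i.property
    have hr1 : 1 ≤ Nat.count EvenZ (i : ℕ) := count_pos h1
    set R : ℕ+ := ⟨Nat.count EvenZ (i : ℕ), hr1⟩ with hRdef
    have hcolx : colx R = i := by
      apply PNat.coe_injective
      show nthE ((R : ℕ+) : ℕ) = (i : ℕ)
      exact nthE_count hE
    have hcond := hrow R
    rw [hcolx] at hcond
    by_cases hER : EvenZ ((R : ℕ+) : ℕ)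
    · rw [if_pos hER] at hcond
      exact (split_xy k hcond).1
    · rwa [if_neg hER, add_zero] at hcond
  -- v lies in k·x at odd coordinates
  have hOddv : ∀ i : ℕ+, ¬ EvenZ (i : ℕ) → ∃ c : k, v i = c • xA k := by
    intro i hO
    by_cases hi1 : (i : ℕ) = 1
    · have : i = 1 := PNat.coe_injective (by rw [hi1, PNat.one_coe])
      rw [this]
      exact hv1
    · have h2 : 2 ≤ (i : ℕ) := by
        have h1 : 1 ≤ (i : ℕ) := i.property
        omega
      have hOdd : OddZ (i : ℕ) := (oddZ_iff_not_evenZ _).2 hO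
      obtain ⟨hE1, hE2, hE3, hE4⟩ := oddZ_pred h2 hOdd
      set R : ℕ+ := ⟨Nat.count EvenZ ((i : ℕ) - 1), hE4⟩ with hRdef
      have hcoly : coly R = i := by
        apply PNat.coe_injective
        show nthE ((R : ℕ+) : ℕ) + 1 = (i : ℕ)
        have : nthE ((R : ℕ+) : ℕ) = (i : ℕ) - 1 := hE3
        omega
      have hER : EvenZ ((R : ℕ+) : ℕ) := hE2
      have hcond := hrow R
      rw [if_pos hER, hcoly] at hcond
      have := (split_xy k hcond).2
      exact y_mul_eq_zero k this
  -- decomposability everywhere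
  have hAll : ∀ i : ℕ+, ∃ p : k × Adef k, v i = p.1 • xA k + yA k * p.2 := by
    intro i
    by_cases hE : EvenZ (i : ℕ)
    · obtain ⟨c, b, hcb⟩ := x_mul_zero_form k (hEven i hE)
      exact ⟨(c, b), hcb⟩
    · obtain ⟨c, hc⟩ := hOddv i hE
      exact ⟨(c, 0), by rw [hc, mul_zero, add_zero]⟩
  -- the preimage
  refine ⟨Finsupp.onFinset (wSet k v) (wAux k v) (wAux_support k v), ?_⟩
  ext i
  rw [Dlin_apply]
  show xA k * wAux k v (colx i) +
      (if EvenZ (i : ℕ) then yA k * wAux k v (coly i) else 0) = v i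
  -- compute w at the x-slot
  have hwx : wAux k v (colx i) = (decompA k (v i)).1 • (1 : Adef k) := by
    unfold wAux
    have h2 : 2 ≤ ((colx i : ℕ+) : ℕ) := two_le_nthE i.property
    rw [dif_pos h2]
    have hE : EvenZ ((colx i : ℕ+) : ℕ) := evenZ_nthE (i : ℕ)
    rw [if_pos hE]
    have hidx : (⟨Nat.count EvenZ ((colx i : ℕ+) : ℕ), count_pos (by omega)⟩ : ℕ+) = i := by
      apply PNat.coe_injective
      show Nat.count EvenZ (nthE (i : ℕ)) = (i : ℕ)
      exact count_nthE (i : ℕ)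
    rw [hidx]
  by_cases hE : EvenZ (i : ℕ)
  · -- even row: both slots
    have hwy : wAux k v (coly i) = (decompA k (v i)).2 := by
      unfold wAux
      have h2 : 2 ≤ ((coly i : ℕ+) : ℕ) := by
        have : 2 ≤ nthE (i : ℕ) := two_le_nthE i.property
        show 2 ≤ nthE (i : ℕ) + 1
        omega
      rw [dif_pos h2]
      have hOdd : OddZ ((coly i : ℕ+) : ℕ) := oddZ_nthE_succ i.property hE
      have hnE : ¬ EvenZ ((coly i : ℕ+) : ℕ) := fun h => not_evenZ_and_oddZ _ ⟨h, hOdd⟩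
      rw [if_neg hnE]
      have hidx : (⟨Nat.count EvenZ (((coly i : ℕ+) : ℕ) - 1), count_pos (by omega)⟩ : ℕ+) = i := by
        apply PNat.coe_injective
        show Nat.count EvenZ (nthE (i : ℕ) + 1 - 1) = (i : ℕ)
        rw [Nat.add_sub_cancel]
        exact count_nthE (i : ℕ)
      rw [hidx]
    rw [hwx, hwy, if_pos hE, mul_smul_comm, mul_one]
    exact (decompA_spec k (hAll i)).symm
  · -- odd row: x slot only
    rw [hwx, if_neg hE, add_zero, mul_smul_comm, mul_one]
    obtain ⟨c, hc⟩ := hOddv i hE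
    have hspec := decompA_spec k (hAll i)
    set d := decompA k (v i) with hd
    have h := hspec.symm.trans hc
    have hyb : yA k * d.2 = (c - d.1) • xA k := by
      rw [sub_smul, ← h]
      abel
    have hyb0 : yA k * d.2 = 0 := y_mul_smul_x k hyb
    rw [hspec, hyb0, add_zero]

end DiffMod3


section Final
variable (k : Type u) [CommRing k]

lemma mem_range_xmul {z : Adef k} :
    z ∈ LinearMap.range (xmul k) ↔ ∃ a : Adef k, xA k * a = z := by
  constructor
  · rintro ⟨a, rfl⟩
    exact ⟨a, (xmul_apply k a).symm⟩
  · rintro ⟨a, ha⟩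
    exact ⟨a, by rw [xmul_apply]; exact ha⟩

/-- `a ↦ y a` as a map into `ker (x·)`. -/
noncomputable def yKer : Adef k →ₗ[Adef k] LinearMap.ker (xmul k) :=
  LinearMap.codRestrict (LinearMap.ker (xmul k)) (yA k • LinearMap.id)
    (fun a => by
      rw [LinearMap.mem_ker]
      show xmul k (yA k • a) = 0
      rw [xmul_apply, smul_eq_mul, ← mul_assoc, xy, zero_mul])

lemma yKer_coe (a : Adef k) : ((yKer k a : LinearMap.ker (xmul k)) : Adef k) = yA k * a := by
  show yA k • a = yA k * a
  rw [smul_eq_mul]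

/-- The map `A → H(A, x·)`, `a ↦ [y a]`. -/
noncomputable def toHx : Adef k →ₗ[Adef k] homologyOf (xmul k) :=
  (Submodule.mkQ _) ∘ₗ yKer k

lemma toHx_x : toHx k (xA k) = 0 := by
  unfold toHx
  rw [LinearMap.comp_apply]
  have hzero : yKer k (xA k) = 0 := by
    apply Subtype.ext
    rw [yKer_coe, yx]
    rfl
  rw [hzero, map_zero]

/-- The induced map `A/(x) → H(A, x·)`. -/
noncomputable def psiQ :
    (Adef k ⧸ (Ideal.span ({xA k} : Set (Adef k)))) →ₗ[Adef k] homologyOf (xmul k) :=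
  Submodule.liftQ _ (toHx k) (by
    rw [Ideal.span_le, Set.singleton_subset_iff]
    show toHx k (xA k) = 0
    exact toHx_x k)

lemma psiQ_bijective : Function.Bijective (psiQ k) := by
  constructor
  · rw [injective_iff_map_eq_zero]
    intro q hq
    obtain ⟨a, rfl⟩ := Submodule.Quotient.mk_surjective _ q
    unfold psiQ at hq
    rw [Submodule.liftQ_apply] at hq
    unfold toHx at hq
    rw [LinearMap.comp_apply, Submodule.mkQ_apply, Submodule.Quotient.mk_eq_zero,
      Submodule.mem_comap] at hq
    have h2 : yA k * a ∈ LinearMap.range (xmul k) := by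
      rw [← yKer_coe k a]
      exact hq
    rw [mem_range_xmul] at h2
    obtain ⟨u, hu⟩ := h2
    obtain ⟨c, hc⟩ := x_mul_eq k u
    have h3 : yA k * a = c • xA k := by rw [← hu]; exact hc
    have h4 : yA k * a = 0 := y_mul_smul_x k h3
    obtain ⟨c2, hc2⟩ := y_mul_eq_zero k h4
    rw [Submodule.Quotient.mk_eq_zero]
    exact (mem_span_x_iff k).2 ⟨c2, hc2⟩
  · intro q
    obtain ⟨u, rfl⟩ := Submodule.Quotient.mk_surjective _ q
    have hxz : xA k * (u : Adef k) = 0 := by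
      have h := u.2
      rw [LinearMap.mem_ker, xmul_apply] at h
      exact h
    obtain ⟨c, b, hcb⟩ := x_mul_zero_form k hxz
    refine ⟨Submodule.Quotient.mk b, ?_⟩
    unfold psiQ
    rw [Submodule.liftQ_apply]
    unfold toHx
    rw [LinearMap.comp_apply, Submodule.mkQ_apply, Submodule.Quotient.eq, Submodule.mem_comap]
    have hcoe : (LinearMap.ker (xmul k)).subtype (yKer k b - u) =
        yA k * b - (u : Adef k) := by
      rw [map_sub]
      rw [show (LinearMap.ker (xmul k)).subtype (yKer k b) = yA k * b from yKer_coe k b]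
      rfl
    rw [hcoe, mem_range_xmul]
    refine ⟨(-c) • (1 : Adef k), ?_⟩
    rw [mul_smul_comm, mul_one, neg_smul, hcb]
    abel

end Final


section Final2
variable (k : Type u) [CommRing k]

lemma hMap_bijective :
    Function.Bijective (hMap (Dlin k) (xmul k) (phi k) (hmor_eq k)) := by
  constructor
  · rw [injective_iff_map_eq_zero]
    intro q hq
    obtain ⟨u, rfl⟩ := Submodule.Quotient.mk_surjective _ q
    unfold hMap at hq
    rw [Submodule.mapQ_apply, Submodule.Quotient.mk_eq_zero, Submodule.mem_comap] at hq
    have h2 : phi k (u : ℕ+ →₀ Adef k) ∈ LinearMap.range (xmul k) := hq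
    rw [mem_range_xmul] at h2
    obtain ⟨a0, ha0⟩ := h2
    obtain ⟨c, hc⟩ := x_mul_eq k a0
    have h3 : yA k * ((u : ℕ+ →₀ Adef k) 1) = c • xA k := by
      rw [← phi_apply, ← ha0]
      exact hc
    have h4 := y_mul_smul_x k h3
    obtain ⟨c2, hc2⟩ := y_mul_eq_zero k h4
    obtain ⟨w, hw⟩ := exists_preimage k (u : ℕ+ →₀ Adef k)
      (LinearMap.mem_ker.1 u.2) ⟨c2, hc2⟩
    rw [Submodule.Quotient.mk_eq_zero, Submodule.mem_comap]
    exact ⟨w, hw⟩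
  · intro q
    obtain ⟨u, rfl⟩ := Submodule.Quotient.mk_surjective _ q
    have hxz : xA k * (u : Adef k) = 0 := by
      have h := u.2
      rw [LinearMap.mem_ker, xmul_apply] at h
      exact h
    obtain ⟨c, b, hcb⟩ := x_mul_zero_form k hxz
    refine ⟨Submodule.Quotient.mk
      (⟨Finsupp.single 1 b, LinearMap.mem_ker.2 (single_ker k b)⟩ :
        LinearMap.ker (Dlin k)), ?_⟩
    unfold hMap
    rw [Submodule.mapQ_apply, Submodule.Quotient.eq, Submodule.mem_comap]
    have hcoe : (LinearMap.ker (xmul k)).subtype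
        ((phi k).restrict (mapsTo_ker (hmor_eq k))
          ⟨Finsupp.single 1 b, LinearMap.mem_ker.2 (single_ker k b)⟩ - u) =
        yA k * b - (u : Adef k) := by
      rw [map_sub]
      have h1 : (LinearMap.ker (xmul k)).subtype
          ((phi k).restrict (mapsTo_ker (hmor_eq k))
            ⟨Finsupp.single 1 b, LinearMap.mem_ker.2 (single_ker k b)⟩) =
          phi k (Finsupp.single 1 b) := rfl
      rw [h1, phi_apply, Finsupp.single_eq_same]
      rfl
    rw [hcoe, mem_range_xmul]
    refine ⟨(-c) • (1 : Adef k), ?_⟩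
    rw [mul_smul_comm, mul_one, neg_smul, hcb]
    abel

end Final2

/-- The map `φ(a₁, a₂, …) = y·a₁` is a morphism of differential
`A`-modules `(A^{(ℕ)}, ∂) → (A, x·)`, and the induced map on homology is an isomorphism;
in particular `ker ∂ / im ∂ ≅ A/(x)`. -/
theorem phi_quasiIso
    (hnoeth : IsNoetherianRing k) (hhered : IsHereditary k) :
    ∃ hmor : phi k ∘ₗ Dlin k = xmul k ∘ₗ phi k,
      Function.Bijective (hMap (Dlin k) (xmul k) (phi k) hmor) ∧
      Nonempty (homologyOf (Dlin k) ≃ₗ[Adef k]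
        (Adef k ⧸ Ideal.span ({xA k} : Set (Adef k)))) := by
  refine ⟨hmor_eq k, hMap_bijective k, ⟨?_⟩⟩
  exact (LinearEquiv.ofBijective _ (hMap_bijective k)).trans
    (LinearEquiv.ofBijective (psiQ k) (psiQ_bijective k)).symm

end QShapedExample
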